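/- For all ζ, ζ_*, ζ', ζ'_* ∈ 𝓔 and ω ∈ S², the map S_ω[ζ,ζ_*,ζ',ζ'_*] is continuously differentiable on the open set F[ζ,ζ_*,ζ',ζ'_*] := {(v,v_*) ∈ ℝ³×ℝ³ : Δ(v,v_*,ζ,ζ_*,ζ',ζ'_*) > 0 and v ≠ v_*}, and the absolute value of the determinant of its (total) derivative at any (v,v_*) ∈ F[ζ,ζ_*,ζ',ζ'_*] equals |v' − v'_*| / |v − v_*|, where (v',v'_*) = S_ω[ζ,ζ_*,ζ',ζ'_*](v,v_*). -/

import Mathlib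

open MeasureTheory Real

noncomputable section

/-- ℝ³ with its Euclidean structure. -/
abbrev V3 := EuclideanSpace ℝ (Fin 3)

/-- `T_ω[V] = V - 2 (ω ⬝ V) ω`, the reflection with respect to `(ℝω)^⊥`. -/
def Tmap (ω V : V3) : V3 := V - (2 * (inner ℝ ω V : ℝ)) • ω

/-- `Δ(v, v⋆, ζ, ζ⋆, ζ', ζ'⋆) = ¼|v − v⋆|² + (1/m)(ε(ζ) + ε(ζ⋆) − ε(ζ') − ε(ζ'⋆))`. -/
def Δcol (m : ℝ) {𝓔 : Type*} (ε : 𝓔 → ℝ) (v vs : V3) (z zs z' zs' : 𝓔) : ℝ :=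
  (1 / 4) * ‖v - vs‖ ^ 2 + (1 / m) * (ε z + ε zs - ε z' - ε zs')

/-- `F[ζ,ζ⋆,ζ',ζ'⋆] = {(v,v⋆) : Δ > 0 and v ≠ v⋆}`. -/
def Fcol (m : ℝ) {𝓔 : Type*} (ε : 𝓔 → ℝ) (z zs z' zs' : 𝓔) : Set (V3 × V3) :=
  {p | 0 < Δcol m ε p.1 p.2 z zs z' zs' ∧ p.1 ≠ p.2}

/-- The collision transformation `S_ω[ζ,ζ⋆,ζ',ζ'⋆] (v, v⋆) = (v', v'⋆)`. -/
def Scol (m : ℝ) {𝓔 : Type*} (ε : 𝓔 → ℝ) (z zs z' zs' : 𝓔) (ω : V3) (p : V3 × V3) :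
    V3 × V3 :=
  ((1 / 2 : ℝ) • (p.1 + p.2) +
      Real.sqrt (Δcol m ε p.1 p.2 z zs z' zs') • Tmap ω (‖p.1 - p.2‖⁻¹ • (p.1 - p.2)),
    (1 / 2 : ℝ) • (p.1 + p.2) -
      Real.sqrt (Δcol m ε p.1 p.2 z zs z' zs') • Tmap ω (‖p.1 - p.2‖⁻¹ • (p.1 - p.2)))

/-!
In centre-of-mass and relative coordinates `(v + v⋆, v - v⋆)` the collision map fixes the
first coordinate and sends the relative velocity `w` to `2 T_ω (F(‖w‖²) w)`, where
`F(s) = √(s/4 + C) / √s` and `C = (ε(ζ) + ε(ζ⋆) - ε(ζ') - ε(ζ'⋆)) / m`. The coordinate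
change cancels in the determinant, the factor `2` gives `2³`, the reflection `T_ω` gives `-1`,
and a radial map `w ↦ F(‖w‖²) w` on ℝⁿ has Jacobian `F^(n-1) (F + 2 s F')`, which for this `F`
and `n = 3` is `F² √s / (4 √(s/4 + C)) = √Δ / (4 ‖w‖)`. Altogether
`|det| = 2 √Δ / ‖w‖ = ‖v' - v'⋆‖ / ‖v - v⋆‖`.
-/

open Module

theorem LinearMap.det_id_add_smulRight {K M : Type*} [Field K] [AddCommGroup M] [Module K M]
    [FiniteDimensional K M] (ℓ : M →ₗ[K] K) (u : M) :
    LinearMap.det (LinearMap.id + ℓ.smulRight u) = 1 + ℓ u := by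
  let b := Module.finBasis K M
  have hmat : LinearMap.toMatrix b b (ℓ.smulRight u) =
      Matrix.replicateCol (Fin 1) (b.repr u) * Matrix.replicateRow (Fin 1) (fun i => ℓ (b i)) := by
    ext i j
    simp [LinearMap.toMatrix_apply, Matrix.mul_apply, mul_comm]
  have hdot : (fun i => ℓ (b i)) ⬝ᵥ b.repr u = ℓ u := by
    conv_rhs => rw [← b.sum_repr u, map_sum]
    simp only [dotProduct, map_smul, smul_eq_mul, mul_comm]
  rw [← LinearMap.det_toMatrix b, map_add, LinearMap.toMatrix_id, hmat, ← hdot]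
  exact Matrix.det_one_add_replicateCol_mul_replicateRow _ _

section CenterRelative

variable {E : Type*} [NormedAddCommGroup E] [NormedSpace ℝ E]

def sumSubEquiv : (E × E) ≃L[ℝ] E × E :=
  ContinuousLinearEquiv.equivOfInverse
    ((ContinuousLinearMap.fst ℝ E E + ContinuousLinearMap.snd ℝ E E).prod
      (ContinuousLinearMap.fst ℝ E E - ContinuousLinearMap.snd ℝ E E))
    ((1 / 2 : ℝ) • ((ContinuousLinearMap.fst ℝ E E + ContinuousLinearMap.snd ℝ E E).prod
      (ContinuousLinearMap.fst ℝ E E - ContinuousLinearMap.snd ℝ E E)))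
    (fun q => by ext <;>
      simp only [smul_apply, ContinuousLinearMap.prod_apply, add_apply, sub_apply,
        ContinuousLinearMap.coe_fst', ContinuousLinearMap.coe_snd', Prod.smul_mk] <;> module)
    (fun q => by ext <;>
      simp only [smul_apply, ContinuousLinearMap.prod_apply, add_apply, sub_apply,
        ContinuousLinearMap.coe_fst', ContinuousLinearMap.coe_snd', Prod.smul_mk] <;> module)

def collisionMap (G : E → E) (q : E × E) : E × E :=
  ((1 / 2 : ℝ) • (q.1 + q.2) + G (q.1 - q.2), (1 / 2 : ℝ) • (q.1 + q.2) - G (q.1 - q.2))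

theorem collisionMap_eq_conj (G : E → E) :
    collisionMap G = sumSubEquiv.symm ∘ Prod.map id (fun w => (2 : ℝ) • G w) ∘ sumSubEquiv := by
  ext <;>
    simp only [collisionMap, sumSubEquiv, ContinuousLinearEquiv.symm_equivOfInverse,
      Function.comp_apply, ContinuousLinearEquiv.equivOfInverse_apply, Prod.map_apply, id_eq,
      ContinuousLinearMap.prod_apply, add_apply, sub_apply, smul_apply,
      ContinuousLinearMap.coe_fst', ContinuousLinearMap.coe_snd', Prod.smul_mk] <;>
    module

theorem contDiffAt_collisionMap {G : E → E} {p : E × E} {n : WithTop ℕ∞}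
    (hG : ContDiffAt ℝ n G (p.1 - p.2)) : ContDiffAt ℝ n (collisionMap G) p := by
  have hM : ContDiffAt ℝ n (fun q : E × E => (1 / 2 : ℝ) • (q.1 + q.2)) p :=
    (contDiff_fst.add contDiff_snd).contDiffAt.const_smul _
  have hGp : ContDiffAt ℝ n (fun q : E × E => G (q.1 - q.2)) p :=
    hG.comp p (contDiff_fst.sub contDiff_snd).contDiffAt
  exact (hM.add hGp).prodMk (hM.sub hGp)

theorem det_fderiv_collisionMap [FiniteDimensional ℝ E] {G : E → E} {p : E × E}
    (hG : DifferentiableAt ℝ G (p.1 - p.2)) :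
    (fderiv ℝ (collisionMap G) p).det = 2 ^ finrank ℝ E * (fderiv ℝ G (p.1 - p.2)).det := by
  set G' := fderiv ℝ G (p.1 - p.2)
  have hP : HasFDerivAt (Prod.map id (fun w => (2 : ℝ) • G w))
      ((ContinuousLinearMap.id ℝ E).prodMap ((2 : ℝ) • G')) (sumSubEquiv p) :=
    (hasFDerivAt_id _).prodMap _ (hG.hasFDerivAt.const_smul (2 : ℝ))
  have hD := (sumSubEquiv (E := E)).symm.hasFDerivAt.comp p
    (hP.comp p (sumSubEquiv (E := E)).hasFDerivAt)
  rw [← collisionMap_eq_conj] at hD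
  rw [hD.fderiv]
  change LinearMap.det (((sumSubEquiv (E := E)).symm.toLinearEquiv : E × E →ₗ[ℝ] E × E) ∘ₗ
    ((ContinuousLinearMap.id ℝ E).prodMap ((2 : ℝ) • G') : E × E →ₗ[ℝ] E × E) ∘ₗ
    ((sumSubEquiv (E := E)).symm.toLinearEquiv.symm : E × E →ₗ[ℝ] E × E)) = _
  rw [LinearMap.det_conj, ContinuousLinearMap.coe_prodMap, LinearMap.det_prodMap,
    ContinuousLinearMap.toLinearMap_smul, LinearMap.det_smul, ContinuousLinearMap.coe_id,
    LinearMap.det_id, one_mul]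

end CenterRelative

section Radial

variable {E : Type*} [NormedAddCommGroup E] [InnerProductSpace ℝ E]

theorem hasFDerivAt_radial {F : ℝ → ℝ} {F' : ℝ} {w : E} (hF : HasDerivAt F F' (‖w‖ ^ 2)) :
    HasFDerivAt (fun x : E => F (‖x‖ ^ 2) • x)
      (F (‖w‖ ^ 2) • ContinuousLinearMap.id ℝ E + (2 * F') • (innerSL ℝ w).smulRight w) w := by
  have h : HasFDerivAt (fun x : E => F (‖x‖ ^ 2) • x) _ w :=
    (hF.comp_hasFDerivAt w (hasStrictFDerivAt_norm_sq w).hasFDerivAt).smul (hasFDerivAt_id w)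
  refine h.congr_fderiv ?_
  ext v
  simp only [add_apply, smul_apply, ContinuousLinearMap.smulRight_apply, innerSL_apply_apply,
    Function.comp_apply]
  module

theorem ContinuousLinearMap.det_smul_id_add_smulRight_innerSL [FiniteDimensional ℝ E] {w : E}
    (hw : w ≠ 0) {a b : ℝ} (ha : a ≠ 0) :
    (a • ContinuousLinearMap.id ℝ E + b • (innerSL ℝ w).smulRight w).det
      = a ^ (finrank ℝ E - 1) * (a + b * ‖w‖ ^ 2) := by
  have hn : 0 < finrank ℝ E := Module.finrank_pos_iff_exists_ne_zero.mpr ⟨w, hw⟩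
  have h : ((a • ContinuousLinearMap.id ℝ E + b • (innerSL ℝ w).smulRight w : E →L[ℝ] E) :
      E →ₗ[ℝ] E) = a • (LinearMap.id + ((a⁻¹ * b) • (innerSL ℝ w : E →ₗ[ℝ] ℝ)).smulRight w) := by
    ext v
    simp only [toLinearMap_add, toLinearMap_smul, coe_id, coe_smulRight, toLinearMap_innerSL_apply,
      LinearMap.add_apply, LinearMap.smul_apply, LinearMap.id_coe, id_eq, LinearMap.coe_smulRight,
      innerₛₗ_apply_apply, smul_smul, smul_add, smul_eq_mul]
    field_simp
  rw [ContinuousLinearMap.det, h, LinearMap.det_smul, LinearMap.det_id_add_smulRight]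
  obtain ⟨k, hk⟩ := Nat.exists_eq_add_of_lt hn
  simp only [hk, toLinearMap_innerSL_apply, LinearMap.smul_apply, innerₛₗ_apply_apply,
    real_inner_self_eq_norm_sq, smul_eq_mul, add_tsub_cancel_right]
  field_simp
  ring

end Radial

theorem Submodule.det_reflection_orthogonal_span_singleton {E : Type*} [NormedAddCommGroup E]
    [InnerProductSpace ℝ E] [FiniteDimensional ℝ E] {ω : E} (hω : ω ≠ 0) :
    LinearMap.det (ℝ ∙ ω)ᗮ.reflection.toLinearMap = -1 := by
  rw [Submodule.det_reflection, Submodule.orthogonal_orthogonal, finrank_span_singleton hω,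
    pow_one]

theorem Tmap_eq_reflection {ω : V3} (hω : ‖ω‖ = 1) (v : V3) :
    Tmap ω v = (ℝ ∙ ω)ᗮ.reflection v := by
  rw [Submodule.reflection_orthogonal_apply, Submodule.reflection_singleton_apply, hω, Tmap]
  simp only [RCLike.ofReal_real_eq_id, id_eq, one_pow, div_one, neg_sub]
  module

/-- The relative speed after the collision is `2 F(s) √s` when `s` is the squared relative
speed before it. -/
def relSpeedFactor (C s : ℝ) : ℝ := √((1 / 4) * s + C) / √s

/-- The derivative is written so that `F + 2 s F'`, the radial factor of the Jacobian,
reads off as `√s / (4 √(s/4 + C))`. -/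
theorem hasDerivAt_relSpeedFactor {C s : ℝ} (hs : 0 < s) (hΔ : 0 < (1 / 4) * s + C) :
    HasDerivAt (relSpeedFactor C)
      ((√s / (4 * √((1 / 4) * s + C)) - relSpeedFactor C s) / (2 * s)) s := by
  have ha : HasDerivAt (fun t => √((1 / 4) * t + C)) ((1 / 4) / (2 * √((1 / 4) * s + C))) s :=
    (((hasDerivAt_id s).const_mul (1 / 4)).add_const C).sqrt hΔ.ne' |>.congr_deriv (by simp)
  refine (ha.div (Real.hasDerivAt_sqrt hs.ne') (Real.sqrt_pos.mpr hs).ne').congr_deriv ?_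
  have hsa : 0 < √((1 / 4) * s + C) := Real.sqrt_pos.mpr hΔ
  have hss : 0 < √s := Real.sqrt_pos.mpr hs
  rw [relSpeedFactor, Real.sq_sqrt hs.le]
  field_simp

theorem contDiffAt_relSpeedFactor {C s : ℝ} {n : WithTop ℕ∞} (hs : 0 < s)
    (hΔ : 0 < (1 / 4) * s + C) : ContDiffAt ℝ n (relSpeedFactor C) s :=
  ((contDiffAt_id.const_smul (1 / 4 : ℝ)).add contDiffAt_const |>.sqrt hΔ.ne').div
    (contDiffAt_id.sqrt hs.ne') (Real.sqrt_pos.mpr hs).ne'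

section RelativeUpdate

variable {E : Type*} [NormedAddCommGroup E] [InnerProductSpace ℝ E]

def relUpdate (C : ℝ) (ω w : E) : E := (ℝ ∙ ω)ᗮ.reflection (relSpeedFactor C (‖w‖ ^ 2) • w)

theorem contDiffAt_relUpdate {C : ℝ} {ω w : E} {n : WithTop ℕ∞} (hw : w ≠ 0)
    (hΔ : 0 < (1 / 4) * ‖w‖ ^ 2 + C) : ContDiffAt ℝ n (relUpdate C ω) w := by
  have hF := contDiffAt_relSpeedFactor (n := n) (by positivity) hΔ
  exact ((ℝ ∙ ω)ᗮ.reflection.toContinuousLinearEquiv : E →L[ℝ] E).contDiff.contDiffAt.comp w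
    ((hF.comp w (contDiffAt_id.norm_sq ℝ)).smul contDiffAt_id)

theorem det_fderiv_relUpdate [FiniteDimensional ℝ E] {C : ℝ} {ω w : E} (hω : ω ≠ 0)
    (hw : w ≠ 0) (hΔ : 0 < (1 / 4) * ‖w‖ ^ 2 + C) :
    (fderiv ℝ (relUpdate C ω) w).det =
      -(relSpeedFactor C (‖w‖ ^ 2) ^ (finrank ℝ E - 1) *
        (‖w‖ / (4 * √((1 / 4) * ‖w‖ ^ 2 + C)))) := by
  have hs : 0 < ‖w‖ ^ 2 := by positivity
  set F := relSpeedFactor C (‖w‖ ^ 2)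
  have hF : 0 < F := div_pos (Real.sqrt_pos.mpr hΔ) (Real.sqrt_pos.mpr hs)
  let R : E →L[ℝ] E := (ℝ ∙ ω)ᗮ.reflection.toContinuousLinearEquiv
  have hD : HasFDerivAt (relUpdate C ω) _ w :=
    R.hasFDerivAt.comp w (hasFDerivAt_radial (hasDerivAt_relSpeedFactor hs hΔ))
  have hR : LinearMap.det (R : E →ₗ[ℝ] E) = -1 :=
    Submodule.det_reflection_orthogonal_span_singleton hω
  rw [hD.fderiv, ContinuousLinearMap.det, ContinuousLinearMap.toLinearMap_comp, LinearMap.det_comp,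
    hR, ← ContinuousLinearMap.det,
    ContinuousLinearMap.det_smul_id_add_smulRight_innerSL hw hF.ne', Real.sqrt_sq (norm_nonneg w)]
  field_simp
  ring

end RelativeUpdate

section Collision

variable {m : ℝ} {𝓔 : Type*} {ε : 𝓔 → ℝ} {z zs z' zs' : 𝓔} {ω : V3}

theorem isOpen_Fcol : IsOpen (Fcol m ε z zs z' zs') := by
  have hΔ : Continuous fun p : V3 × V3 => Δcol m ε p.1 p.2 z zs z' zs' := by
    unfold Δcol
    fun_prop
  exact (isOpen_lt continuous_const hΔ).inter (isOpen_ne_fun continuous_fst continuous_snd)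

theorem Scol_eq_collisionMap (hω : ‖ω‖ = 1) :
    Scol m ε z zs z' zs' ω =
      collisionMap (relUpdate ((1 / m) * (ε z + ε zs - ε z' - ε zs')) ω) := by
  funext p
  simp only [Scol, collisionMap, relUpdate, relSpeedFactor, Δcol, Tmap_eq_reflection hω,
    map_smul, smul_smul, Real.sqrt_sq (norm_nonneg _), div_eq_mul_inv]

theorem norm_Scol_fst_sub_snd (hω : ‖ω‖ = 1) {p : V3 × V3} (hp : p.1 ≠ p.2) :
    ‖(Scol m ε z zs z' zs' ω p).1 - (Scol m ε z zs z' zs' ω p).2‖ =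
      2 * √(Δcol m ε p.1 p.2 z zs z' zs') := by
  have hw : ‖p.1 - p.2‖ ≠ 0 := norm_ne_zero_iff.mpr (sub_ne_zero.mpr hp)
  have hdiff : (Scol m ε z zs z' zs' ω p).1 - (Scol m ε z zs z' zs' ω p).2 =
      (2 * √(Δcol m ε p.1 p.2 z zs z' zs')) • Tmap ω (‖p.1 - p.2‖⁻¹ • (p.1 - p.2)) := by
    simp only [Scol]
    module
  rw [hdiff, norm_smul, Tmap_eq_reflection hω, LinearIsometryEquiv.norm_map, norm_smul,
    norm_inv, norm_norm, inv_mul_cancel₀ hw, mul_one, Real.norm_of_nonneg (by positivity)]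

theorem det_fderiv_Scol (hω : ‖ω‖ = 1) {p : V3 × V3} (hp : p ∈ Fcol m ε z zs z' zs') :
    (fderiv ℝ (Scol m ε z zs z' zs' ω) p).det =
      -(2 * √(Δcol m ε p.1 p.2 z zs z' zs') / ‖p.1 - p.2‖) := by
  obtain ⟨hΔ, hp⟩ := hp
  have hw : p.1 - p.2 ≠ 0 := sub_ne_zero.mpr hp
  have hω0 : ω ≠ 0 := norm_ne_zero_iff.mp (by rw [hω]; exact one_ne_zero)
  rw [Scol_eq_collisionMap hω,
    det_fderiv_collisionMap ((contDiffAt_relUpdate (n := 1) hw hΔ).differentiableAt one_ne_zero),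
    det_fderiv_relUpdate hω0 hw hΔ, finrank_euclideanSpace_fin, relSpeedFactor,
    Real.sqrt_sq (norm_nonneg _)]
  change 2 ^ 3 * -((√(Δcol m ε p.1 p.2 z zs z' zs') / ‖p.1 - p.2‖) ^ 2 *
    (‖p.1 - p.2‖ / (4 * √(Δcol m ε p.1 p.2 z zs z' zs')))) = _
  have hr : 0 < ‖p.1 - p.2‖ := norm_pos_iff.mpr hw
  have ha : 0 < √(Δcol m ε p.1 p.2 z zs z' zs') := Real.sqrt_pos.mpr hΔ
  generalize ‖p.1 - p.2‖ = r at hr ⊢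
  generalize √(Δcol m ε p.1 p.2 z zs z' zs') = a at ha ⊢
  field_simp
  ring

end Collision

theorem collision_map_jacobian_general
    {𝓔 : Type*} (m : ℝ) (ε : 𝓔 → ℝ) (z zs z' zs' : 𝓔) (ω : V3) (hω : ‖ω‖ = 1) :
    IsOpen (Fcol m ε z zs z' zs') ∧
    ContDiffOn ℝ 1 (Scol m ε z zs z' zs' ω) (Fcol m ε z zs z' zs') ∧
    (∀ p ∈ Fcol m ε z zs z' zs',
      |(fderiv ℝ (Scol m ε z zs z' zs' ω) p).det|
        = ‖(Scol m ε z zs z' zs' ω p).1 - (Scol m ε z zs z' zs' ω p).2‖ / ‖p.1 - p.2‖) := by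
  refine ⟨isOpen_Fcol, fun p hp => ?_, fun p hp => ?_⟩
  · rw [Scol_eq_collisionMap hω]
    exact (contDiffAt_collisionMap
      (contDiffAt_relUpdate (sub_ne_zero.mpr hp.2) hp.1)).contDiffWithinAt
  · rw [det_fderiv_Scol hω hp, norm_Scol_fst_sub_snd hω hp.2,
      abs_neg, abs_of_nonneg (by positivity)]

/-- **Lemma 2 (Jacobian of the collision transformation).**
`S_ω[ζ,ζ⋆,ζ',ζ'⋆]` is `C¹` on the open set `F[ζ,ζ⋆,ζ',ζ'⋆]` and for every
`(v,v⋆) ∈ F[ζ,ζ⋆,ζ',ζ'⋆]` the absolute value of the determinant of its total derivative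
equals `|v' − v'⋆| / |v − v⋆|`, where `(v',v'⋆) = S_ω[ζ,ζ⋆,ζ',ζ'⋆](v,v⋆)`. -/
theorem collision_map_jacobian
    {𝓔 : Type*} [MeasurableSpace 𝓔] (μ : Measure 𝓔) (hμ : μ Set.univ ≠ 0)
    (m : ℝ) (hm : 0 < m) (ε : 𝓔 → ℝ) (hε : Measurable ε)
    (z zs z' zs' : 𝓔) (ω : V3) (hω : ‖ω‖ = 1) :
    IsOpen (Fcol m ε z zs z' zs') ∧
    ContDiffOn ℝ 1 (Scol m ε z zs z' zs' ω) (Fcol m ε z zs z' zs') ∧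
    (∀ p ∈ Fcol m ε z zs z' zs',
      |(fderiv ℝ (Scol m ε z zs z' zs' ω) p).det|
        = ‖(Scol m ε z zs z' zs' ω p).1 - (Scol m ε z zs z' zs' ω p).2‖ / ‖p.1 - p.2‖) :=
  collision_map_jacobian_general m ε z zs z' zs' ω hω
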